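/- arXiv:math/0306119 — 2 statements merged into one kernel-verified Lean document; each statement's English description precedes it below -/
import Mathlib

section
/- Let 𝒟 = {{1,2,3},{1,4,5},{2,4,6},{3,5,6},{1,6,7},{2,5,7}} ⊆ [7]^(3), let ℰ = {E ∈ [n]^(4) : there exists D ∈ 𝒟 with D ⊆ E}, and let ℱ = ℰ ∪ {{1,2,5,8},{3,4,7,8}}. There exists n₀ such that for all n ≥ n₀: every set A ∈ [n]^(4) ∖ ℱ that meets every set of ℱ satisfies A ⊆ [8]. -/
open Finset

/-- The ground set `[n] = {1, …, n}`. -/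
def grd (n : ℕ) : Finset ℕ := Finset.Icc 1 n

/-- `[n]^(k)`: all `k`-element subsets of `[n]`. -/
def ksets (n k : ℕ) : Finset (Finset ℕ) := (grd n).powersetCard k

/-- A family of sets is intersecting if any two of its members meet. -/
def IsIntersecting (𝒜 : Finset (Finset ℕ)) : Prop :=
  ∀ A ∈ 𝒜, ∀ B ∈ 𝒜, (A ∩ B).Nonempty

/-- `𝒜⟨k⟩`: the collection of `k`-sets arising as pairwise intersections of members of `𝒜`. -/
def interk (𝒜 : Finset (Finset ℕ)) (k : ℕ) : Finset (Finset ℕ) :=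
  ((𝒜 ×ˢ 𝒜).image fun p => p.1 ∩ p.2).filter fun C => C.card = k

/-- `𝒜⟨1⟩` identified with a set of points: all `x` with `{x} = A ∩ B` for some `A, B ∈ 𝒜`. -/
def interPts (𝒜 : Finset (Finset ℕ)) : Finset ℕ :=
  (interk 𝒜 1).sup id

/-- `β(n,r,k)`: the maximum of `|𝒜⟨k⟩|` over intersecting families `𝒜 ⊆ [n]^(r)`. -/
noncomputable def beta (n r k : ℕ) : ℕ :=
  sSup {m | ∃ 𝒜 ⊆ ksets n r, IsIntersecting 𝒜 ∧ (interk 𝒜 k).card = m}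

/-- `α^(r) = max {β(n,r,1) : n ≥ r}` (finite by Lovász's theorem). -/
noncomputable def alpha (r : ℕ) : ℕ :=
  sSup {m | ∃ n, r ≤ n ∧ beta n r 1 = m}

/-- The family `𝒟 ⊆ [7]^(3)` from the Remarks section. -/
def famD : Finset (Finset ℕ) := {{1,2,3},{1,4,5},{2,4,6},{3,5,6},{1,6,7},{2,5,7}}

/-- `ℰ = {E ∈ [n]^(4) : ∃ D ∈ 𝒟, D ⊆ E}`. -/
def famE (n : ℕ) : Finset (Finset ℕ) := (ksets n 4).filter fun E => ∃ D ∈ famD, D ⊆ E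

/-- `ℱ = ℰ ∪ {{1,2,5,8},{3,4,7,8}}`. -/
def famF (n : ℕ) : Finset (Finset ℕ) := famE n ∪ {{1,2,5,8},{3,4,7,8}}

set_option maxRecDepth 10000 in
lemma key_finite : ∀ S ∈ (Finset.Icc 1 8).powerset, S.card ≤ 3 →
    (∀ D ∈ famD, (S ∩ D).Nonempty) →
    (S ∩ ({1,2,5,8} : Finset ℕ)).Nonempty →
    (S ∩ ({3,4,7,8} : Finset ℕ)).Nonempty →
    (∀ D ∈ famD, ¬ D ⊆ S) → False := by decide

lemma famD_facts : ∀ D ∈ famD, D ⊆ Finset.Icc 1 7 ∧ D.card = 3 := by decide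

/-- For `n` large, every `4`-set outside `ℱ` meeting every member of `ℱ` lies inside `[8]`. -/
theorem stmt_15 :
    ∃ n₀ : ℕ, ∀ n, n₀ ≤ n →
      ∀ A ∈ ksets n 4, A ∉ famF n → (∀ F ∈ famF n, (A ∩ F).Nonempty) →
        A ⊆ Finset.Icc 1 8 := by
  refine ⟨13, fun n hn A hA hAF hint => ?_⟩
  by_contra hsub
  obtain ⟨x, hxA, hx8⟩ := Finset.not_subset.mp hsub
  rw [ksets, grd, Finset.mem_powersetCard] at hA
  obtain ⟨hAsub, hAcard⟩ := hA
  -- pick a fresh point y ∈ [9, n] \ A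
  have hcard : ¬ (Finset.Icc 9 n ⊆ A) := fun h => by
    have := Finset.card_le_card h
    rw [Nat.card_Icc, hAcard] at this; omega
  obtain ⟨y, hy, hyA⟩ := Finset.not_subset.mp hcard
  rw [Finset.mem_Icc] at hy
  -- A meets every D ∈ famD
  have hmeetD : ∀ D ∈ famD, (A ∩ D).Nonempty := by
    intro D hD
    obtain ⟨hD7, hDcard⟩ := famD_facts D hD
    have hyD : y ∉ D := fun h => by have := Finset.mem_Icc.mp (hD7 h); omega
    have hE : insert y D ∈ famF n := by
      have : insert y D ∈ famE n := by
        rw [famE, Finset.mem_filter, ksets, grd, Finset.mem_powersetCard]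
        refine ⟨⟨?_, ?_⟩, D, hD, Finset.subset_insert _ _⟩
        · intro z hz
          rcases Finset.mem_insert.mp hz with rfl | hz
          · exact Finset.mem_Icc.mpr ⟨by omega, hy.2⟩
          · have := Finset.mem_Icc.mp (hD7 hz); exact Finset.mem_Icc.mpr ⟨this.1, by omega⟩
        · rw [Finset.card_insert_of_notMem hyD, hDcard]
      exact Finset.mem_union_left _ this
    obtain ⟨z, hz⟩ := hint _ hE
    rw [Finset.mem_inter, Finset.mem_insert] at hz
    rcases hz.2 with rfl | hzD
    · exact absurd hz.1 hyA
    · exact ⟨z, Finset.mem_inter.mpr ⟨hz.1, hzD⟩⟩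
  -- the two extra sets are in famF
  have h1 : ({1,2,5,8} : Finset ℕ) ∈ famF n := by
    apply Finset.mem_union_right; decide
  have h2 : ({3,4,7,8} : Finset ℕ) ∈ famF n := by
    apply Finset.mem_union_right; decide
  -- apply the finite check with S = A ∩ [8]
  set S := A ∩ Finset.Icc 1 8 with hS
  apply key_finite S (Finset.mem_powerset.mpr (Finset.inter_subset_right))
  · -- card S ≤ 3
    have : S ⊆ A.erase x := by
      intro z hz
      rw [Finset.mem_inter] at hz
      exact Finset.mem_erase.mpr ⟨fun h => hx8 (h ▸ hz.2), hz.1⟩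
    calc S.card ≤ (A.erase x).card := Finset.card_le_card this
      _ = 3 := by rw [Finset.card_erase_of_mem hxA, hAcard]
  · intro D hD
    obtain ⟨z, hz⟩ := hmeetD D hD
    rw [Finset.mem_inter] at hz
    have hz8 : z ∈ Finset.Icc 1 8 := by
      have := Finset.mem_Icc.mp ((famD_facts D hD).1 hz.2)
      exact Finset.mem_Icc.mpr ⟨this.1, by omega⟩
    exact ⟨z, Finset.mem_inter.mpr ⟨Finset.mem_inter.mpr ⟨hz.1, hz8⟩, hz.2⟩⟩
  · obtain ⟨z, hz⟩ := hint _ h1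
    rw [Finset.mem_inter] at hz
    have hz2 := hz.2
    have hz8 : z ∈ Finset.Icc 1 8 := by
      fin_cases hz2 <;> decide
    exact ⟨z, Finset.mem_inter.mpr ⟨Finset.mem_inter.mpr ⟨hz.1, hz8⟩, hz.2⟩⟩
  · obtain ⟨z, hz⟩ := hint _ h2
    rw [Finset.mem_inter] at hz
    have hz2 := hz.2
    have hz8 : z ∈ Finset.Icc 1 8 := by
      fin_cases hz2 <;> decide
    exact ⟨z, Finset.mem_inter.mpr ⟨Finset.mem_inter.mpr ⟨hz.1, hz8⟩, hz.2⟩⟩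
  · intro D hD hDS
    apply hAF
    apply Finset.mem_union_left
    rw [famE, Finset.mem_filter, ksets, grd, Finset.mem_powersetCard]
    exact ⟨⟨hAsub, hAcard⟩, D, hD, hDS.trans Finset.inter_subset_left⟩
end

section
/- Fix 1 ≤ k ≤ r. There exists n₀ such that for all n ≥ n₀, β(n,r,k) ≥ C(n,k) − C(n − α^(r−k+1), k), where C(·,·) denotes the binomial coefficient; that is, there exists an intersecting family 𝒜 ⊆ [n]^(r) whose number of k-intersections is at least the number of k-subsets of [n] meeting [α^(r−k+1)]. -/
open Finset

lemma grd_card (n : ℕ) : (grd n).card = n := by simp [grd]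

lemma mem_interk {𝒜 : Finset (Finset ℕ)} {k : ℕ} {C : Finset ℕ} :
    C ∈ interk 𝒜 k ↔ (∃ A ∈ 𝒜, ∃ B ∈ 𝒜, A ∩ B = C) ∧ C.card = k := by
  simp only [interk, Finset.mem_filter, Finset.mem_image, Finset.mem_product, Prod.exists]
  constructor
  · rintro ⟨⟨A, B, ⟨hA, hB⟩, rfl⟩, h2⟩; exact ⟨⟨A, hA, B, hB, rfl⟩, h2⟩
  · rintro ⟨⟨A, hA, B, hB, rfl⟩, h2⟩; exact ⟨⟨A, B, ⟨hA, hB⟩, rfl⟩, h2⟩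

lemma interk_subset_ksets {𝒜 : Finset (Finset ℕ)} {n r k : ℕ} (h : 𝒜 ⊆ ksets n r) :
    interk 𝒜 k ⊆ ksets n k := by
  intro C hC
  rw [mem_interk] at hC
  obtain ⟨⟨A, hA, B, hB, rfl⟩, h2⟩ := hC
  have hA' := h hA
  rw [ksets, Finset.mem_powersetCard] at hA' ⊢
  exact ⟨(Finset.inter_subset_left).trans hA'.1, h2⟩

lemma le_beta {n r k : ℕ} {𝒜 : Finset (Finset ℕ)} (h𝒜 : 𝒜 ⊆ ksets n r)
    (hint : IsIntersecting 𝒜) : (interk 𝒜 k).card ≤ beta n r k := by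
  apply le_csSup
  · refine ⟨(ksets n k).card, ?_⟩
    rintro m ⟨ℬ, h1, h2, rfl⟩
    exact Finset.card_le_card (interk_subset_ksets h1)
  · exact ⟨𝒜, h𝒜, hint, rfl⟩

lemma count_meets {n k : ℕ} {S : Finset ℕ} (hS : S ⊆ grd n) :
    ((ksets n k).filter fun C => (C ∩ S).Nonempty).card
      = n.choose k - (n - S.card).choose k := by
  classical
  have hneg : ((ksets n k).filter fun C => ¬(C ∩ S).Nonempty)
      = (grd n \ S).powersetCard k := by
    ext C
    simp only [Finset.mem_filter, ksets, Finset.mem_powersetCard,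
      Finset.not_nonempty_iff_eq_empty, ← Finset.disjoint_iff_inter_eq_empty,
      Finset.subset_sdiff]
    tauto
  have htot := Finset.card_filter_add_card_filter_not
    (s := ksets n k) (p := fun C => (C ∩ S).Nonempty)
  have h1 : (ksets n k).card = n.choose k := by
    rw [ksets, Finset.card_powersetCard, grd_card]
  have h2 : ((ksets n k).filter fun C => ¬(C ∩ S).Nonempty).card
      = (n - S.card).choose k := by
    rw [hneg, Finset.card_powersetCard, Finset.card_sdiff_of_subset hS, grd_card]
  omega

lemma mem_interPts {𝒟 : Finset (Finset ℕ)} {x : ℕ} :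
    x ∈ interPts 𝒟 ↔ {x} ∈ interk 𝒟 1 := by
  rw [interPts, Finset.mem_sup]
  constructor
  · rintro ⟨t, ht, hx⟩
    have hc : t.card = 1 := (mem_interk.mp ht).2
    obtain ⟨y, rfl⟩ := Finset.card_eq_one.mp hc
    simp only [id] at hx
    rw [Finset.mem_singleton] at hx
    subst hx; exact ht
  · intro h; exact ⟨{x}, h, by simp⟩

lemma interPts_card {𝒟 : Finset (Finset ℕ)} :
    (interPts 𝒟).card = (interk 𝒟 1).card := by
  classical
  have : interk 𝒟 1 = (interPts 𝒟).image (fun x => ({x} : Finset ℕ)) := by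
    ext C
    simp only [Finset.mem_image]
    constructor
    · intro hC
      obtain ⟨y, rfl⟩ := Finset.card_eq_one.mp (mem_interk.mp hC).2
      exact ⟨y, mem_interPts.mpr hC, rfl⟩
    · rintro ⟨y, hy, rfl⟩; exact mem_interPts.mp hy
  rw [this, Finset.card_image_of_injective _ (fun a b h => by
    simpa using Finset.singleton_injective h)]

lemma interPts_subset {𝒟 : Finset (Finset ℕ)} {m r' : ℕ} (h : 𝒟 ⊆ ksets m r') :
    interPts 𝒟 ⊆ grd m := by
  intro x hx
  have h1 := mem_interPts.mp hx
  obtain ⟨⟨A, hA, B, hB, hAB⟩, _⟩ := mem_interk.mp h1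
  have hA' := h hA
  rw [ksets, Finset.mem_powersetCard] at hA'
  apply hA'.1
  have : x ∈ A ∩ B := hAB ▸ Finset.mem_singleton_self x
  exact (Finset.mem_inter.mp this).1

lemma key_construction {n₁ r' : ℕ} (𝒟 : Finset (Finset ℕ)) (h𝒟 : 𝒟 ⊆ ksets n₁ r')
    (h𝒟int : IsIntersecting 𝒟) (k n : ℕ) (hk : 1 ≤ k) (hn : n₁ + 3 * k ≤ n) :
    ∃ 𝒜 ⊆ ksets n (r' + (k - 1)), IsIntersecting 𝒜 ∧
      ((ksets n k).filter fun C => (C ∩ interPts 𝒟).Nonempty) ⊆ interk 𝒜 k := by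
  classical
  set r := r' + (k - 1) with hr
  have hgrd : grd n₁ ⊆ grd n := Finset.Icc_subset_Icc le_rfl (by omega)
  set 𝒜 := ((𝒟 ×ˢ (grd n).powersetCard (k - 1)).filter fun p => Disjoint p.1 p.2).image
      (fun p => p.1 ∪ p.2) with h𝒜
  have hmem𝒜 : ∀ D E : Finset ℕ, D ∈ 𝒟 → E ∈ (grd n).powersetCard (k - 1) →
      Disjoint D E → D ∪ E ∈ 𝒜 := by
    intro D E hD hE hdisj
    exact Finset.mem_image.mpr ⟨(D, E),
      Finset.mem_filter.mpr ⟨Finset.mem_product.mpr ⟨hD, hE⟩, hdisj⟩, rfl⟩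
  have hDsub : ∀ D ∈ 𝒟, D ⊆ grd n₁ ∧ D.card = r' := by
    intro D hD
    have := h𝒟 hD
    rwa [ksets, Finset.mem_powersetCard] at this
  refine ⟨𝒜, ?_, ?_, ?_⟩
  · -- 𝒜 ⊆ ksets n r
    intro A hA
    obtain ⟨⟨D, E⟩, hp, rfl⟩ := Finset.mem_image.mp hA
    rw [Finset.mem_filter, Finset.mem_product] at hp
    obtain ⟨⟨hD, hE⟩, hdisj⟩ := hp
    rw [Finset.mem_powersetCard] at hE
    rw [ksets, Finset.mem_powersetCard]
    constructor
    · exact Finset.union_subset ((hDsub D hD).1.trans hgrd) hE.1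
    · rw [Finset.card_union_of_disjoint hdisj, (hDsub D hD).2, hE.2]
  · -- intersecting
    intro A hA B hB
    obtain ⟨⟨D, E⟩, hp, rfl⟩ := Finset.mem_image.mp hA
    obtain ⟨⟨D', E'⟩, hp', rfl⟩ := Finset.mem_image.mp hB
    rw [Finset.mem_filter, Finset.mem_product] at hp hp'
    have h1 := h𝒟int D hp.1.1 D' hp'.1.1
    exact h1.mono (Finset.inter_subset_inter Finset.subset_union_left
      Finset.subset_union_left)
  · -- every k-set meeting interPts 𝒟 is an intersection
    intro C hCfil
    rw [Finset.mem_filter] at hCfil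
    obtain ⟨hC, hCT⟩ := hCfil
    rw [ksets, Finset.mem_powersetCard] at hC
    obtain ⟨x, hx⟩ := hCT
    rw [Finset.mem_inter] at hx
    obtain ⟨hxC, hxT⟩ := hx
    obtain ⟨⟨D, hD, D', hD', hDD⟩, -⟩ := mem_interk.mp (mem_interPts.mp hxT)
    have hxD : x ∈ D := by
      have : x ∈ D ∩ D' := hDD ▸ Finset.mem_singleton_self x
      exact (Finset.mem_inter.mp this).1
    have hxD' : x ∈ D' := by
      have : x ∈ D ∩ D' := hDD ▸ Finset.mem_singleton_self x
      exact (Finset.mem_inter.mp this).2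
    have hCD : (C \ D).card ≤ k - 1 := by
      have hss : C \ D ⊂ C := ⟨Finset.sdiff_subset, fun h =>
        (Finset.mem_sdiff.mp (h hxC)).2 hxD⟩
      have := Finset.card_lt_card hss
      omega
    have hCD' : (C \ D').card ≤ k - 1 := by
      have hss : C \ D' ⊂ C := ⟨Finset.sdiff_subset, fun h =>
        (Finset.mem_sdiff.mp (h hxC)).2 hxD'⟩
      have := Finset.card_lt_card hss
      omega
    set avail := grd n \ (grd n₁ ∪ C) with havail
    have havset : ∀ z ∈ avail, z ∉ grd n₁ ∧ z ∉ C := by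
      intro z hz
      rw [havail, Finset.mem_sdiff, Finset.mem_union] at hz
      tauto
    have havsub : avail ⊆ grd n := Finset.sdiff_subset
    have havailcard : 2 * k ≤ avail.card := by
      have h1 : grd n₁ ∪ C ⊆ grd n := Finset.union_subset hgrd hC.1
      rw [havail, Finset.card_sdiff_of_subset h1, grd_card]
      have h2 : (grd n₁ ∪ C).card ≤ n₁ + k := by
        calc (grd n₁ ∪ C).card ≤ (grd n₁).card + C.card := Finset.card_union_le _ _
        _ = n₁ + k := by rw [grd_card, hC.2]
      omega
    obtain ⟨P, hPsub, hPcard⟩ := Finset.exists_subset_card_eq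
      (show k - 1 - (C \ D).card ≤ avail.card by omega)
    have hP'le : k - 1 - (C \ D').card ≤ (avail \ P).card := by
      rw [Finset.card_sdiff_of_subset hPsub]
      omega
    obtain ⟨P', hP'sub, hP'card⟩ := Finset.exists_subset_card_eq hP'le
    have hP'avail : P' ⊆ avail := hP'sub.trans Finset.sdiff_subset
    have hPP' : Disjoint P P' :=
      (Finset.disjoint_of_subset_left hP'sub Finset.sdiff_disjoint).symm
    set E := (C \ D) ∪ P with hE
    set E' := (C \ D') ∪ P' with hE'
    have hEmem : E ∈ (grd n).powersetCard (k - 1) := by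
      rw [Finset.mem_powersetCard]
      refine ⟨Finset.union_subset (Finset.sdiff_subset.trans hC.1) (hPsub.trans havsub), ?_⟩
      rw [Finset.card_union_of_disjoint, hPcard]
      · omega
      · exact Finset.disjoint_left.mpr fun z hz hzP =>
          (havset z (hPsub hzP)).2 (Finset.mem_sdiff.mp hz).1
    have hE'mem : E' ∈ (grd n).powersetCard (k - 1) := by
      rw [Finset.mem_powersetCard]
      refine ⟨Finset.union_subset (Finset.sdiff_subset.trans hC.1) (hP'avail.trans havsub), ?_⟩
      rw [Finset.card_union_of_disjoint, hP'card]
      · omega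
      · exact Finset.disjoint_left.mpr fun z hz hzP =>
          (havset z (hP'avail hzP)).2 (Finset.mem_sdiff.mp hz).1
    have hDE : Disjoint D E := by
      rw [hE, Finset.disjoint_union_right]
      refine ⟨Finset.disjoint_sdiff, Finset.disjoint_left.mpr fun z hz hzP =>
        (havset z (hPsub hzP)).1 ((hDsub D hD).1 hz)⟩
    have hD'E' : Disjoint D' E' := by
      rw [hE', Finset.disjoint_union_right]
      refine ⟨Finset.disjoint_sdiff, Finset.disjoint_left.mpr fun z hz hzP =>
        (havset z (hP'avail hzP)).1 ((hDsub D' hD').1 hz)⟩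
    have hA : D ∪ E ∈ 𝒜 := hmem𝒜 D E hD hEmem hDE
    have hA' : D' ∪ E' ∈ 𝒜 := hmem𝒜 D' E' hD' hE'mem hD'E'
    have hinter : (D ∪ E) ∩ (D' ∪ E') = C := by
      ext z
      simp only [Finset.mem_inter, Finset.mem_union, hE, hE', Finset.mem_sdiff]
      constructor
      · rintro ⟨h1, h2⟩
        by_contra hzC
        have h1' : z ∈ D ∨ z ∈ P := by tauto
        have h2' : z ∈ D' ∨ z ∈ P' := by tauto
        rcases h1' with hzD | hzP
        · rcases h2' with hzD' | hzP'
          · have : z ∈ D ∩ D' := Finset.mem_inter.mpr ⟨hzD, hzD'⟩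
            rw [hDD, Finset.mem_singleton] at this
            exact hzC (this ▸ hxC)
          · exact (havset z (hP'avail hzP')).1 ((hDsub D hD).1 hzD)
        · rcases h2' with hzD' | hzP'
          · exact (havset z (hPsub hzP)).1 ((hDsub D' hD').1 hzD')
          · exact (Finset.disjoint_left.mp hPP' hzP) hzP'
      · intro hzC
        constructor
        · by_cases hzD : z ∈ D
          · exact Or.inl hzD
          · exact Or.inr (Or.inl ⟨hzC, hzD⟩)
        · by_cases hzD : z ∈ D'
          · exact Or.inl hzD
          · exact Or.inr (Or.inl ⟨hzC, hzD⟩)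
    exact mem_interk.mpr ⟨⟨D ∪ E, hA, D' ∪ E', hA', hinter⟩, hC.2⟩


/-- Lower bound from Construction 1: for `n` large,
`β(n,r,k) ≥ C(n,k) - C(n - α^(r-k+1), k)`; indeed some intersecting `𝒜 ⊆ [n]^(r)` has at least
as many `k`-intersections as there are `k`-subsets of `[n]` meeting `[α^(r-k+1)]`. -/
theorem stmt_17 (k r : ℕ) (hk : 1 ≤ k) (hkr : k ≤ r) :
    ∃ n₀ : ℕ, ∀ n, n₀ ≤ n →
      n.choose k - (n - alpha (r - k + 1)).choose k ≤ beta n r k ∧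
      ∃ 𝒜 ⊆ ksets n r, IsIntersecting 𝒜 ∧
        ((ksets n k).filter fun C =>
            (C ∩ Finset.Icc 1 (alpha (r - k + 1))).Nonempty).card ≤
          (interk 𝒜 k).card := by
  classical
  set a := alpha (r - k + 1) with ha
  by_cases h0 : a = 0
  · -- trivial case
    refine ⟨0, fun n _ => ?_⟩
    have hempty : ((ksets n k).filter fun C =>
        (C ∩ Finset.Icc 1 a).Nonempty) = ∅ := by
      rw [h0]
      simp [Finset.Icc_eq_empty_of_lt]
    have hAemp : (∅ : Finset (Finset ℕ)) ⊆ ksets n r := Finset.empty_subset _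
    have hint : IsIntersecting (∅ : Finset (Finset ℕ)) := by
      intro A hA
      exact absurd hA (Finset.notMem_empty _)
    constructor
    · rw [h0]
      simp
    · exact ⟨∅, hAemp, hint, by rw [hempty]; simp⟩
  · -- main case
    have hbdd : BddAbove {m | ∃ n, r - k + 1 ≤ n ∧ beta n (r - k + 1) 1 = m} := by
      by_contra hb
      have : a = 0 := by
        rw [ha, alpha, csSup_of_not_bddAbove hb, csSup_empty]
        rfl
      exact h0 this
    have hne : Set.Nonempty {m | ∃ n, r - k + 1 ≤ n ∧ beta n (r - k + 1) 1 = m} :=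
      ⟨beta (r - k + 1) (r - k + 1) 1, r - k + 1, le_rfl, rfl⟩
    have hamem : a ∈ {m | ∃ n, r - k + 1 ≤ n ∧ beta n (r - k + 1) 1 = m} := by
      rw [ha, alpha]
      exact Nat.sSup_mem hne hbdd
    obtain ⟨n₁, hn₁, hbeta⟩ := hamem
    -- extract the extremal family 𝒟
    have hbdd1 : BddAbove {m | ∃ 𝒜 ⊆ ksets n₁ (r - k + 1), IsIntersecting 𝒜 ∧
        (interk 𝒜 1).card = m} := by
      refine ⟨(ksets n₁ 1).card, ?_⟩
      rintro m ⟨ℬ, h1, h2, rfl⟩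
      exact Finset.card_le_card (interk_subset_ksets h1)
    have hne1 : Set.Nonempty {m | ∃ 𝒜 ⊆ ksets n₁ (r - k + 1), IsIntersecting 𝒜 ∧
        (interk 𝒜 1).card = m} := by
      refine ⟨0, ∅, Finset.empty_subset _, ?_, ?_⟩
      · intro A hA
        exact absurd hA (Finset.notMem_empty _)
      · simp [interk]
    have hDmem : a ∈ {m | ∃ 𝒜 ⊆ ksets n₁ (r - k + 1), IsIntersecting 𝒜 ∧
        (interk 𝒜 1).card = m} := by
      rw [← hbeta, beta]
      exact Nat.sSup_mem hne1 hbdd1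
    obtain ⟨𝒟, h𝒟, h𝒟int, h𝒟card⟩ := hDmem
    set T := interPts 𝒟 with hT
    have hTcard : T.card = a := by rw [hT, interPts_card, h𝒟card]
    have hTsub : T ⊆ grd n₁ := interPts_subset h𝒟
    have haLe : a ≤ n₁ := by
      have := Finset.card_le_card hTsub
      rw [hTcard, grd_card] at this
      exact this
    refine ⟨n₁ + 3 * k, fun n hn => ?_⟩
    obtain ⟨𝒜, h𝒜sub, h𝒜int, h𝒜key⟩ :=
      key_construction 𝒟 h𝒟 h𝒟int k n hk hn
    have hrr : r - k + 1 + (k - 1) = r := by omega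
    rw [hrr] at h𝒜sub
    have hTsubn : T ⊆ grd n := hTsub.trans (Finset.Icc_subset_Icc le_rfl (by omega))
    have hIccsub : Finset.Icc 1 a ⊆ grd n := Finset.Icc_subset_Icc le_rfl (by omega)
    have hcount1 : ((ksets n k).filter fun C => (C ∩ Finset.Icc 1 a).Nonempty).card
        = n.choose k - (n - a).choose k := by
      rw [count_meets hIccsub, Nat.card_Icc]
      simp
    have hcount2 : ((ksets n k).filter fun C => (C ∩ T).Nonempty).card
        = n.choose k - (n - a).choose k := by
      rw [count_meets hTsubn, hTcard]
    have hle : ((ksets n k).filter fun C => (C ∩ Finset.Icc 1 a).Nonempty).card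
        ≤ (interk 𝒜 k).card := by
      rw [hcount1, ← hcount2]
      exact Finset.card_le_card h𝒜key
    refine ⟨?_, 𝒜, h𝒜sub, h𝒜int, hle⟩
    calc n.choose k - (n - a).choose k
        = ((ksets n k).filter fun C => (C ∩ Finset.Icc 1 a).Nonempty).card := hcount1.symm
      _ ≤ (interk 𝒜 k).card := hle
      _ ≤ beta n r k := le_beta h𝒜sub h𝒜int
end
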